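/- Let $0 = T_0 < T_1 < T_2 < \cdots$ be a strictly increasing sequence (on the set where finite) in $[0,\infty]$ with $T_n \to \infty$, let $(\xi_n)_{n\ge 0}$ be a sequence in a set $K$, and define $X_t = \xi_n$ for $t \in [T_n, T_{n+1})$. Fix $t \ge 0$, let $N_t = \#\{n \ge 1 : T_n \le t\}$, and for $x \in K$ define $X^{t,x}_s = x$ for $s \in [t, T_{N_t+1})$ and $X^{t,x}_s = \xi_n$ for $s\in[T_n,T_{n+1})$ with $n \ge N_t + 1$. Then for all $0 \le u \le t \le s$ and $x \in K$: $X^{t, X^{u,x}_t}_s = X^{u,x}_s$ (flow property). -/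

import Mathlib

/-- `Ncount T t` is the number of jump times `T n`, `n ≥ 1`, with `T n ≤ t`;
equivalently, the largest `n` with `T n ≤ t` (for `T` strictly increasing with `T 0 = 0`). -/
noncomputable def Ncount (T : ℕ → ℝ) (t : ℝ) : ℕ := sSup {n : ℕ | T n ≤ t}

/-- The marked point process restarted at time `t` from state `x`: it equals `x` on
`[t, T_{N_t + 1})` and follows the original jump sequence afterwards,
i.e. equals `ξ n` on `[T n, T (n+1))` for `n ≥ N_t + 1`. -/
noncomputable def Xflow {K : Type*} (T : ℕ → ℝ) (ξ : ℕ → K) (t : ℝ) (x : K) (s : ℝ) : K :=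
  if s < T (Ncount T t + 1) then x else ξ (Ncount T s)

/-!
Write `N s` for `Ncount T s`. Since `T` is monotone and `N s + 1` is the first index whose jump
time exceeds `s`, the restarted process at time `s` is `y` exactly when no jump happened in
`(t, s]`, i.e. `X^{t,y}_s = if N s ≤ N t then y else ξ (N s)`. The flow property is then a
comparison of the three counts `N u ≤ N t ≤ N s`.
-/

open Filter

section Ncount

variable {T : ℕ → ℝ}

lemma bddAbove_setOf_le_of_tendsto_atTop (htend : Tendsto T atTop atTop) (s : ℝ) :
    BddAbove {n | T n ≤ s} := by
  obtain ⟨N, hN⟩ := eventually_atTop.mp (htend.eventually_gt_atTop s)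
  exact ⟨N, fun n hn => not_lt.mp fun hNn => (hN n hNn.le).not_ge hn⟩

lemma lt_apply_Ncount_succ {s : ℝ} (h : BddAbove {n | T n ≤ s}) : s < T (Ncount T s + 1) :=
  not_le.mp fun hle => (Nat.lt_succ_self _).not_ge (le_csSup h hle)

lemma Ncount_le_iff (hT : Monotone T) {s : ℝ} {n : ℕ} (h : BddAbove {n | T n ≤ s}) :
    Ncount T s ≤ n ↔ s < T (n + 1) := by
  refine ⟨fun hle => (lt_apply_Ncount_succ h).trans_le (hT (by omega)), fun hs => ?_⟩
  refine csSup_le' fun m hm => not_lt.mp fun hnm => ?_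
  exact (hs.trans_le (hT hnm)).not_ge hm

lemma Ncount_mono (h : ∀ s, BddAbove {n | T n ≤ s}) : Monotone (Ncount T) :=
  fun _ b hab => csSup_le_csSup' (h b) fun _ hn => le_trans hn hab

lemma Xflow_eq_ite {K : Type*} (ξ : ℕ → K) (hT : Monotone T) (h : ∀ s, BddAbove {n | T n ≤ s})
    (t : ℝ) (y : K) (s : ℝ) :
    Xflow T ξ t y s = if Ncount T s ≤ Ncount T t then y else ξ (Ncount T s) := by
  simp only [Ncount_le_iff hT (h s), Xflow]

end Ncount

theorem stmt10_general {K : Type*} (T : ℕ → ℝ) (ξ : ℕ → K)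
    (hmono : StrictMono T)
    (htend : Filter.Tendsto T Filter.atTop Filter.atTop)
    (u t s : ℝ) (x : K) (hut : u ≤ t) (hts : t ≤ s) :
    Xflow T ξ t (Xflow T ξ u x t) s = Xflow T ξ u x s := by
  have hbdd := bddAbove_setOf_le_of_tendsto_atTop htend
  have hut' := Ncount_mono hbdd hut
  have hts' := Ncount_mono hbdd hts
  simp only [Xflow_eq_ite ξ hmono.monotone hbdd]
  split_ifs <;> first | rfl | omega | (congr 1; omega)

/-- Flow property of the family of restarted marked point processes:
for `0 ≤ u ≤ t ≤ s`, `X^{t, X^{u,x}_t}_s = X^{u,x}_s`. -/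
theorem stmt10 {K : Type*} (T : ℕ → ℝ) (ξ : ℕ → K)
    (hT0 : T 0 = 0) (hmono : StrictMono T)
    (htend : Filter.Tendsto T Filter.atTop Filter.atTop)
    (u t s : ℝ) (x : K) (hu : 0 ≤ u) (hut : u ≤ t) (hts : t ≤ s) :
    Xflow T ξ t (Xflow T ξ u x t) s = Xflow T ξ u x s :=
  stmt10_general T ξ hmono htend u t s x hut hts
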